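/- For b ∈ ℝ^p the following are equivalent: (i) E[A · (Y − Xᵀb)] = 0 (the zero vector in ℝ^r); (ii) the law of the real random variable Y^v − (X^v)ᵀ b (the pushforward of ℙ) is the same for every deterministic vector v in the column space of M. -/

import Mathlib

open MeasureTheory ProbabilityTheory Matrix

/-!
Let `a` be the row combination of `(I - B)⁻¹` that computes `Y - Xᵀ b`, so that the residual
of the system shifted by `v` is `a ⬝ᵥ ε + a ⬝ᵥ v`, and put `u = aᵀ M`. Both conditions are
equivalent to `u = 0`. For a deterministic shift `v = M d` the residual is `a ⬝ᵥ ε + u ⬝ᵥ d`;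
its law is independent of `d` iff `u = 0`, since the mean already sees `u ⬝ᵥ d`. For the anchor
shift `v = M A`, independence of `ε` and `A` and `E A = 0` give `E[A (Y - Xᵀ b)] = E[A Aᵀ] u`,
which vanishes iff `u = 0` because `E[A Aᵀ]` is positive definite.
-/

theorem Matrix.mulVec_sub_sum_mulVec_eq_dotProduct {R m n ι : Type*} [CommRing R] [Fintype n]
    [Fintype ι] (C : Matrix m n R) (k : m) (e : ι → m) (b : ι → R) (z : n → R) :
    (C *ᵥ z) k - ∑ i, b i * (C *ᵥ z) (e i) = (C k - ∑ i, b i • C (e i)) ⬝ᵥ z := by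
  simp only [mulVec, sub_dotProduct, sum_dotProduct, smul_dotProduct, smul_eq_mul]

section

variable {Ω ι : Type*} [MeasurableSpace Ω] {μ : Measure Ω} [Fintype ι]

theorem eq_zero_of_map_add_const_eq [IsProbabilityMeasure μ] {X : Ω → ℝ} (hX : Integrable X μ)
    {c : ℝ} (h : μ.map (fun ω => X ω + c) = μ.map X) : c = 0 := by
  have hmean : ∫ x, x ∂μ.map (fun ω => X ω + c) = ∫ x, x ∂μ.map X := by rw [h]
  rw [integral_map (f := fun x => x) (hX.aemeasurable.add_const c) aestronglyMeasurable_id,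
    integral_map (f := fun x => x) hX.aemeasurable aestronglyMeasurable_id,
    integral_add hX (integrable_const c), integral_const, probReal_univ, one_smul] at hmean
  linarith

theorem forall_map_add_dotProduct_eq_iff [IsProbabilityMeasure μ] {X : Ω → ℝ}
    (hX : Integrable X μ) (u : ι → ℝ) :
    (∀ d₁ d₂ : ι → ℝ, μ.map (fun ω => X ω + u ⬝ᵥ d₁) = μ.map (fun ω => X ω + u ⬝ᵥ d₂)) ↔
      u = 0 := by
  classical
  constructor
  · intro h
    funext k
    simpa using eq_zero_of_map_add_const_eq hX (by simpa using h (Pi.single k 1) 0)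
  · rintro rfl d₁ d₂
    simp

theorem integral_mul_add_dotProduct_eq_mulVec [IsFiniteMeasure μ] {A : ι → Ω → ℝ} {X : Ω → ℝ}
    (hA : ∀ j, MemLp (A j) 2 μ) (hAmean : ∀ j, ∫ ω, A j ω ∂μ = 0) (hX : Integrable X μ)
    (hindep : ∀ j, IndepFun (A j) X μ) (u : ι → ℝ) (j : ι) :
    ∫ ω, A j ω * (X ω + u ⬝ᵥ fun k => A k ω) ∂μ =
      ((Matrix.of fun i k => ∫ ω, A i ω * A k ω ∂μ) *ᵥ u) j := by
  have hAA : ∀ k, Integrable (fun ω => u k * (A j ω * A k ω)) μ :=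
    fun k => ((hA j).integrable_mul (hA k)).const_mul (u k)
  have hAX : Integrable (fun ω => A j ω * X ω) μ :=
    (hindep j).integrable_mul ((hA j).integrable one_le_two) hX
  calc ∫ ω, A j ω * (X ω + u ⬝ᵥ fun k => A k ω) ∂μ
      = ∫ ω, A j ω * X ω ∂μ + ∫ ω, ∑ k, u k * (A j ω * A k ω) ∂μ := by
        rw [← integral_add hAX (integrable_finsetSum _ fun k _ => hAA k)]
        congr 1 with ω
        simp only [dotProduct, mul_add, Finset.mul_sum]
        congr 1
        exact Finset.sum_congr rfl fun k _ => by ring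
    _ = ∑ k, u k * ∫ ω, A j ω * A k ω ∂μ := by
        rw [(hindep j).integral_fun_mul_eq_mul_integral (hA j).1 hX.1, hAmean j, zero_mul,
          zero_add, integral_finsetSum _ fun k _ => hAA k]
        simp only [integral_const_mul]
    _ = _ := by simp only [mulVec, dotProduct, of_apply, mul_comm]

theorem forall_integral_mul_add_dotProduct_eq_zero_iff [IsFiniteMeasure μ] {A : ι → Ω → ℝ}
    {X : Ω → ℝ} (hA : ∀ j, MemLp (A j) 2 μ) (hAmean : ∀ j, ∫ ω, A j ω ∂μ = 0)
    (hX : Integrable X μ) (hindep : ∀ j, IndepFun (A j) X μ)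
    (hpd : (Matrix.of fun i k => ∫ ω, A i ω * A k ω ∂μ).PosDef) (u : ι → ℝ) :
    (∀ j, ∫ ω, A j ω * (X ω + u ⬝ᵥ fun k => A k ω) ∂μ = 0) ↔ u = 0 := by
  classical
  simp only [integral_mul_add_dotProduct_eq_mulVec hA hAmean hX hindep, ← funext_iff]
  exact (mulVec_injective_of_isUnit hpd.isUnit).eq_iff' (mulVec_zero _)

end

/-- Shift invariance characterization (Rothenhäusler et al., Th. 3): the residual `Y - Xᵀ b` is
uncorrelated with the anchors `A` if and only if the law of `Y^v - (X^v)ᵀ b` is the same for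
every deterministic shift `v` in the column space of `M`. -/
theorem anchor_regression_shift_invariance
    {Ω : Type*} [MeasureSpace Ω] [IsProbabilityMeasure (ℙ : Measure Ω)]
    (p q r : ℕ)
    (B : Matrix (Fin (p + 1 + q)) (Fin (p + 1 + q)) ℝ)
    (M : Matrix (Fin (p + 1 + q)) (Fin r) ℝ)
    (A : Ω → Fin r → ℝ) (ε : Ω → Fin (p + 1 + q) → ℝ)
    (hA2 : ∀ j, MemLp (fun ω => A ω j) 2 ℙ)
    (hε2 : ∀ i, MemLp (fun ω => ε ω i) 2 ℙ)
    (hAmean : ∀ j, ∫ ω, A ω j ∂ℙ = 0)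
    (hIndep : IndepFun ε A ℙ)
    (hApd : (Matrix.of fun i j => ∫ ω, A ω i * A ω j ∂ℙ).PosDef)
    (b : Fin p → ℝ)
    -- residual `Y^v - (X^v)ᵀ b` of the shift-perturbed system `Z^v = (I-B)⁻¹ (ε + v)`
    (res : (Ω → Fin (p + 1 + q) → ℝ) → Ω → ℝ)
    (hres : ∀ v ω, res v ω =
      (1 - B)⁻¹.mulVec (ε ω + v ω) ⟨p, by omega⟩
        - ∑ i : Fin p, b i * (1 - B)⁻¹.mulVec (ε ω + v ω) (Fin.castLE (by omega) i)) :
    (∀ j, ∫ ω, A ω j * res (fun ω' => M.mulVec (A ω')) ω ∂ℙ = 0)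
      ↔ ∀ v₁ v₂ : Fin (p + 1 + q) → ℝ,
          (∃ d : Fin r → ℝ, v₁ = M.mulVec d) → (∃ d : Fin r → ℝ, v₂ = M.mulVec d) →
          Measure.map (res fun _ => v₁) ℙ = Measure.map (res fun _ => v₂) ℙ := by
  set a := (1 - B)⁻¹ ⟨p, by omega⟩ - ∑ i : Fin p, b i • (1 - B)⁻¹ (Fin.castLE (by omega) i)
  set η : Ω → ℝ := fun ω => a ⬝ᵥ ε ω
  have hshift (s : Ω → Fin r → ℝ) :
      res (fun ω => M *ᵥ s ω) = fun ω => η ω + (a ᵥ* M) ⬝ᵥ s ω := by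
    funext ω
    rw [hres, mulVec_sub_sum_mulVec_eq_dotProduct, dotProduct_add, dotProduct_mulVec]
  have hconst (d : Fin r → ℝ) : res (fun _ => M *ᵥ d) = fun ω => η ω + (a ᵥ* M) ⬝ᵥ d :=
    hshift fun _ => d
  have hη : Integrable η ℙ :=
    integrable_finsetSum _ fun k _ => ((hε2 k).integrable one_le_two).const_mul (a k)
  have hindep (j : Fin r) : IndepFun (fun ω => A ω j) η ℙ :=
    hIndep.symm.comp (measurable_pi_apply j) (show Measurable (a ⬝ᵥ ·) by fun_prop)
  have hlaw : (∀ v₁ v₂ : Fin (p + 1 + q) → ℝ,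
      (∃ d, v₁ = M *ᵥ d) → (∃ d, v₂ = M *ᵥ d) →
        Measure.map (res fun _ => v₁) ℙ = Measure.map (res fun _ => v₂) ℙ)
      ↔ ∀ d₁ d₂ : Fin r → ℝ,
        Measure.map (fun ω => η ω + (a ᵥ* M) ⬝ᵥ d₁) ℙ =
          Measure.map (fun ω => η ω + (a ᵥ* M) ⬝ᵥ d₂) ℙ := by
    constructor
    · intro h d₁ d₂
      simpa only [hconst] using h _ _ ⟨d₁, rfl⟩ ⟨d₂, rfl⟩
    · rintro h _ _ ⟨d₁, rfl⟩ ⟨d₂, rfl⟩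
      simpa only [hconst] using h d₁ d₂
  rw [hshift A, hlaw, forall_map_add_dotProduct_eq_iff hη]
  exact forall_integral_mul_add_dotProduct_eq_zero_iff hA2 hAmean hη hindep hApd _
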